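/- Let C be a symmetric monoidal category. In Fam(C) with the fiberwise symmetric monoidal structure, let Bool := I ⨿ I, where I = (PUnit, fun _ => 𝟙_C) is the tensor unit and ⨿ is the binary coproduct, with coproduct injections ttrue, ffalse : I ⟶ Bool. Then for every pair of morphisms f, g : A ⟶ B in Fam(C) there exists a unique morphism h : Bool ⊗ A ⟶ B such that h ∘ (ttrue ⊗ id_A) ∘ (λ_A)⁻¹ = f and h ∘ (ffalse ⊗ id_A) ∘ (λ_A)⁻¹ = g, where λ_A : I ⊗ A ≅ A is the left unitor. -/

import Mathlib

open CategoryTheory CategoryTheory.Limits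

universe w v u

/-- The category `Fam(C)` of families of objects of `C`: an object is a pair
`(X, A)` of a (index) type `X` and a family `A : X → C` of objects of `C`. -/
structure Fam (C : Type u) [CategoryTheory.Category.{v} C] : Type (max (w + 1) u) where
  /-- the index type -/
  idx : Type w
  /-- the family of fibers -/
  fib : idx → C

namespace Fam

variable {C : Type u} [CategoryTheory.Category.{v} C]

/-- A morphism `(X, A) ⟶ (Y, B)` in `Fam(C)` is a pair of a function
`f₀ : X → Y` together with morphisms `f x : A x ⟶ B (f₀ x)` of `C`. -/
instance : CategoryTheory.Category.{max w v} (Fam.{w} C) where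
  Hom A B := Σ f₀ : A.idx → B.idx, ∀ x, A.fib x ⟶ B.fib (f₀ x)
  id A := ⟨fun x => x, fun x => 𝟙 (A.fib x)⟩
  comp f g := ⟨fun x => g.1 (f.1 x), fun x => f.2 x ≫ g.2 (f.1 x)⟩
  id_comp f := congrArg (Sigma.mk f.1) (funext fun x => CategoryTheory.Category.id_comp (f.2 x))
  comp_id f := congrArg (Sigma.mk f.1) (funext fun x => CategoryTheory.Category.comp_id (f.2 x))
  assoc _ _ _ := congrArg (Sigma.mk _) (funext fun _ => CategoryTheory.Category.assoc _ _ _)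

end Fam

namespace Fam

open MonoidalCategory

variable {C : Type u} [Category.{v} C] [MonoidalCategory C]

/-- The fiberwise tensor product on `Fam(C)`:
`(X, A) ⊗ (Y, B) := (X × Y, fun (x, y) => A x ⊗ B y)`. -/
def tensorObj' (A B : Fam.{w} C) : Fam.{w} C :=
  ⟨A.idx × B.idx, fun p => A.fib p.1 ⊗ B.fib p.2⟩

/-- The fiberwise tensor product of morphisms of `Fam(C)`. -/
def tensorHom' {A A' B B' : Fam.{w} C} (f : A ⟶ A') (g : B ⟶ B') :
    tensorObj' A B ⟶ tensorObj' A' B' :=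
  ⟨fun p => (f.1 p.1, g.1 p.2), fun p => f.2 p.1 ⊗ₘ g.2 p.2⟩

/-- The tensor unit of `Fam(C)`: `(PUnit, fun _ => 𝟙_C)`. -/
def unitObj : Fam.{w} C := ⟨PUnit, fun _ => 𝟙_ C⟩

/-- The associator of `Fam(C)`: the evident bijection of product types on
indices, and the associator of `C` on fibers. -/
def assocHom (A B D : Fam.{w} C) :
    tensorObj' (tensorObj' A B) D ⟶ tensorObj' A (tensorObj' B D) :=
  ⟨fun p => (p.1.1, (p.1.2, p.2)), fun _ => (α_ _ _ _).hom⟩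

/-- The left unitor of `Fam(C)`: the evident bijection on indices, and the
left unitor of `C` on fibers. -/
def leftUnitorHom (A : Fam.{w} C) : tensorObj' unitObj A ⟶ A :=
  ⟨fun p => p.2, fun _ => (λ_ _).hom⟩

/-- The right unitor of `Fam(C)`: the evident bijection on indices, and the
right unitor of `C` on fibers. -/
def rightUnitorHom (A : Fam.{w} C) : tensorObj' A unitObj ⟶ A :=
  ⟨fun p => p.1, fun _ => (ρ_ _).hom⟩

/-- The braiding of `Fam(C)`: the swap bijection of product types on indices,
and the braiding of `C` on fibers. -/
def braidHom [SymmetricCategory C] (A B : Fam.{w} C) :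
    tensorObj' A B ⟶ tensorObj' B A :=
  ⟨fun p => (p.2, p.1), fun _ => (β_ _ _).hom⟩

end Fam

namespace Fam

open MonoidalCategory

variable (C : Type u) [Category.{v} C] [MonoidalCategory C]

/-- The object `Bool := I ⨿ I` of `Fam(C)`: the binary coproduct of two
copies of the tensor unit `I = (PUnit, fun _ => 𝟙_C)`. -/
def boolObj : Fam.{w} C := ⟨PUnit.{w + 1} ⊕ PUnit.{w + 1}, fun _ => 𝟙_ C⟩

/-- The first coproduct injection `ttrue : I ⟶ Bool`. -/
def ttrue : (unitObj : Fam.{w} C) ⟶ boolObj C :=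
  ⟨fun x => Sum.inl x, fun _ => 𝟙 (𝟙_ C)⟩

/-- The second coproduct injection `ffalse : I ⟶ Bool`. -/
def ffalse : (unitObj : Fam.{w} C) ⟶ boolObj C :=
  ⟨fun x => Sum.inr x, fun _ => 𝟙 (𝟙_ C)⟩

variable {C}

/-- The inverse of the left unitor `λ_A : I ⊗ A ≅ A` of `Fam(C)`. -/
def leftUnitorInv (A : Fam.{w} C) : A ⟶ tensorObj' unitObj A :=
  ⟨fun x => (PUnit.unit, x), fun _ => (λ_ _).inv⟩

end Fam

/-!
Morphisms of `Fam(C)` out of a disjoint union `A ⨿ B` of index types are pairs of morphisms out of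
`A` and `B`, so it suffices to identify both cofans with disjoint unions compatibly with the
injections. For `ttrue, ffalse` this is `I ⨿ I = Bool` fibrewise. For the second claim, tensoring
distributes over disjoint unions of indices, and the unit fibres are absorbed by the left unitor,
so `A ⨿ A ≅ Bool ⊗ A` with `inl, inr` becoming `(ttrue ⊗ 𝟙) ∘ λ⁻¹, (ffalse ⊗ 𝟙) ∘ λ⁻¹`.
-/

theorem CategoryTheory.Limits.BinaryCofan.IsColimit.existsUnique {D : Type*} [Category D]
    {X Y W : D} {s : BinaryCofan X Y} (hs : IsColimit s) (f : X ⟶ W) (g : Y ⟶ W) :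
    ∃! l : s.pt ⟶ W, s.inl ≫ l = f ∧ s.inr ≫ l = g :=
  let ⟨l, hl⟩ := BinaryCofan.IsColimit.desc' hs f g
  ⟨l, hl, fun _ hm => hom_ext hs (hm.1.trans hl.1.symm) (hm.2.trans hl.2.symm)⟩

namespace Fam

section Coproduct

variable {C : Type u} [Category.{v} C]

/-- Where the index maps agree definitionally, `heq_of_eq` turns the fibre condition into an
equation in `C`. -/
lemma hom_ext {A B : Fam.{w} C} {f g : A ⟶ B} (h₀ : f.1 = g.1)
    (h : ∀ x, HEq (f.2 x) (g.2 x)) : f = g :=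
  Sigma.ext h₀ (Function.hfunext rfl fun x _ hx => eq_of_heq hx ▸ h x)

def coprod (A B : Fam.{w} C) : Fam.{w} C := ⟨A.idx ⊕ B.idx, Sum.elim A.fib B.fib⟩

variable {A B T : Fam.{w} C}

def inl : A ⟶ coprod A B := ⟨Sum.inl, fun a => 𝟙 (A.fib a)⟩

def inr : B ⟶ coprod A B := ⟨Sum.inr, fun b => 𝟙 (B.fib b)⟩

def desc (f : A ⟶ T) (g : B ⟶ T) : coprod A B ⟶ T :=
  ⟨Sum.elim f.1 g.1, fun | .inl a => f.2 a | .inr b => g.2 b⟩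

lemma inl_desc (f : A ⟶ T) (g : B ⟶ T) : inl ≫ desc f g = f :=
  hom_ext rfl fun _ => heq_of_eq (Category.id_comp _)

lemma inr_desc (f : A ⟶ T) (g : B ⟶ T) : inr ≫ desc f g = g :=
  hom_ext rfl fun _ => heq_of_eq (Category.id_comp _)

lemma desc_inl_comp_inr_comp (m : coprod A B ⟶ T) : desc (inl ≫ m) (inr ≫ m) = m :=
  hom_ext (funext fun s => by cases s <;> rfl) fun s => by
    cases s <;> exact heq_of_eq (Category.id_comp _)

variable (A B) in
def coprodIsColimit : IsColimit (BinaryCofan.mk (inl : A ⟶ coprod A B) inr) :=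
  BinaryCofan.IsColimit.mk _ desc inl_desc inr_desc fun _ _ m hf hg =>
    hf ▸ hg ▸ (desc_inl_comp_inr_comp m).symm

def isColimitOfCoprodIso {P : Fam.{w} C} (e : coprod A B ≅ P) {i : A ⟶ P} {j : B ⟶ P}
    (hi : inl ≫ e.hom = i) (hj : inr ≫ e.hom = j) : IsColimit (BinaryCofan.mk i j) :=
  (coprodIsColimit A B).ofIsoColimit (BinaryCofan.ext e hi hj)

end Coproduct

section Bool

open MonoidalCategory

variable (C : Type u) [Category.{v} C] [MonoidalCategory C]

def coprodUnitIsoBool : coprod unitObj unitObj ≅ boolObj.{w} C where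
  hom := ⟨id, fun | .inl _ => 𝟙 (𝟙_ C) | .inr _ => 𝟙 (𝟙_ C)⟩
  inv := ⟨id, fun | .inl _ => 𝟙 (𝟙_ C) | .inr _ => 𝟙 (𝟙_ C)⟩
  hom_inv_id := hom_ext rfl fun s => by cases s <;> exact heq_of_eq (Category.id_comp _)
  inv_hom_id := hom_ext rfl fun s => by cases s <;> exact heq_of_eq (Category.id_comp _)

lemma inl_comp_coprodUnitIsoBool_hom : inl ≫ (coprodUnitIsoBool.{w} C).hom = ttrue C :=
  hom_ext rfl fun _ => heq_of_eq (Category.id_comp _)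

lemma inr_comp_coprodUnitIsoBool_hom : inr ≫ (coprodUnitIsoBool.{w} C).hom = ffalse C :=
  hom_ext rfl fun _ => heq_of_eq (Category.id_comp _)

variable {C}

def coprodIsoBoolTensor (A : Fam.{w} C) : coprod A A ≅ tensorObj' (boolObj C) A where
  hom := ⟨Sum.elim (fun x => (.inl ⟨⟩, x)) (fun x => (.inr ⟨⟩, x)),
    fun | .inl x => (λ_ (A.fib x)).inv | .inr x => (λ_ (A.fib x)).inv⟩
  inv := ⟨fun p => Sum.elim (fun _ => .inl p.2) (fun _ => .inr p.2) p.1,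
    fun | (.inl _, x) => (λ_ (A.fib x)).hom | (.inr _, x) => (λ_ (A.fib x)).hom⟩
  hom_inv_id := hom_ext (funext fun s => by cases s <;> rfl) fun s => by
    cases s <;> exact heq_of_eq (Iso.inv_hom_id _)
  inv_hom_id :=
    hom_ext (funext fun ⟨b, _⟩ => by rcases b with ⟨⟨⟩⟩ | ⟨⟨⟩⟩ <;> rfl) fun ⟨b, _⟩ => by
      rcases b with ⟨⟨⟩⟩ | ⟨⟨⟩⟩ <;> exact heq_of_eq (Iso.hom_inv_id _)

lemma inl_comp_coprodIsoBoolTensor_hom (A : Fam.{w} C) :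
    inl ≫ (coprodIsoBoolTensor A).hom = leftUnitorInv A ≫ tensorHom' (ttrue C) (𝟙 A) :=
  hom_ext rfl fun x => heq_of_eq (show 𝟙 _ ≫ (λ_ (A.fib x)).inv =
    (λ_ (A.fib x)).inv ≫ (𝟙 (𝟙_ C) ⊗ₘ 𝟙 (A.fib x)) by simp)

lemma inr_comp_coprodIsoBoolTensor_hom (A : Fam.{w} C) :
    inr ≫ (coprodIsoBoolTensor A).hom = leftUnitorInv A ≫ tensorHom' (ffalse C) (𝟙 A) :=
  hom_ext rfl fun x => heq_of_eq (show 𝟙 _ ≫ (λ_ (A.fib x)).inv =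
    (λ_ (A.fib x)).inv ≫ (𝟙 (𝟙_ C) ⊗ₘ 𝟙 (A.fib x)) by simp)

end Bool

end Fam

theorem fam_bool_if_then_else_general (C : Type u) [Category.{v} C] [MonoidalCategory C] :
    Nonempty (IsColimit (BinaryCofan.mk (Fam.ttrue.{w} C) (Fam.ffalse.{w} C))) ∧
    ∀ (A B : Fam.{w} C) (f g : A ⟶ B),
      ∃! h : Fam.tensorObj' (Fam.boolObj C) A ⟶ B,
        Fam.leftUnitorInv A ≫ Fam.tensorHom' (Fam.ttrue C) (𝟙 A) ≫ h = f ∧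
        Fam.leftUnitorInv A ≫ Fam.tensorHom' (Fam.ffalse C) (𝟙 A) ≫ h = g := by
  refine ⟨⟨Fam.isColimitOfCoprodIso (Fam.coprodUnitIsoBool C)
    (Fam.inl_comp_coprodUnitIsoBool_hom C) (Fam.inr_comp_coprodUnitIsoBool_hom C)⟩,
    fun A B f g => ?_⟩
  simp only [← Category.assoc]
  exact BinaryCofan.IsColimit.existsUnique
    (Fam.isColimitOfCoprodIso (Fam.coprodIsoBoolTensor A)
      (Fam.inl_comp_coprodIsoBoolTensor_hom A) (Fam.inr_comp_coprodIsoBoolTensor_hom A)) f g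

/-- Let `C` be a symmetric monoidal category. In `Fam(C)`, `ttrue` and
`ffalse` exhibit `Bool` as the coproduct `I ⨿ I`, and for every pair of
morphisms `f, g : A ⟶ B` there is a unique morphism `h : Bool ⊗ A ⟶ B` with
`h ∘ (ttrue ⊗ id_A) ∘ (λ_A)⁻¹ = f` and `h ∘ (ffalse ⊗ id_A) ∘ (λ_A)⁻¹ = g`. -/
theorem fam_bool_if_then_else (C : Type u) [Category.{v} C] [MonoidalCategory C]
    [SymmetricCategory C] :
    Nonempty (IsColimit (BinaryCofan.mk (Fam.ttrue.{w} C) (Fam.ffalse.{w} C))) ∧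
    ∀ (A B : Fam.{w} C) (f g : A ⟶ B),
      ∃! h : Fam.tensorObj' (Fam.boolObj C) A ⟶ B,
        Fam.leftUnitorInv A ≫ Fam.tensorHom' (Fam.ttrue C) (𝟙 A) ≫ h = f ∧
        Fam.leftUnitorInv A ≫ Fam.tensorHom' (Fam.ffalse C) (𝟙 A) ≫ h = g :=
  fam_bool_if_then_else_general C
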